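/- Let X, Y ∈ ℝ^{d×d} be invertible matrices with polar factors 𝒫(X), 𝒫(Y). Then ‖𝒫(X) − 𝒫(Y)‖ ≤ 2√2 · min{σ_min(X)⁻¹, σ_min(Y)⁻¹} · ‖X − Y‖, where ‖·‖ is the operator norm and σ_min denotes the smallest singular value. -/

import Mathlib

open Matrix

noncomputable def opNorm {m n : Type*} [Fintype m] [Fintype n] [DecidableEq n]
    (M : Matrix m n ℝ) : ℝ :=
  ‖(Matrix.toEuclideanLin M).toContinuousLinearMap‖

noncomputable def singularValues {m n : Type*} [Fintype m] [Fintype n] [DecidableEq n]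
    (X : Matrix m n ℝ) : n → ℝ :=
  fun i => Real.sqrt ((Matrix.isHermitian_conjTranspose_mul_self X).eigenvalues i)

noncomputable def svalsDesc {m k : ℕ} (X : Matrix (Fin m) (Fin k) ℝ) : Fin k → ℝ :=
  fun i => (singularValues X ∘ Tuple.sort (singularValues X)) i.rev

noncomputable def eigDesc {n : ℕ} {M : Matrix (Fin n) (Fin n) ℝ} (hM : M.IsHermitian) : Fin n → ℝ :=
  fun i => (hM.eigenvalues ∘ Tuple.sort hM.eigenvalues) i.rev

noncomputable def frobNorm {d : ℕ} (M : Matrix (Fin d) (Fin d) ℝ) : ℝ :=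
  Real.sqrt (Matrix.trace (Mᵀ * M))

def blockRow {n d r : Type*} (M : Matrix (n × d) r ℝ) (i : n) : Matrix d r ℝ :=
  Matrix.of fun a j => M (i, a) j

section PolarAux

open Complex
open scoped Matrix.Norms.L2Operator ComplexConjugate

/-! ### Euclidean norm of plain vectors -/

noncomputable def eN {d : ℕ} {𝕜 : Type*} [RCLike 𝕜] (v : Fin d → 𝕜) : ℝ :=
  ‖(WithLp.equiv 2 (Fin d → 𝕜)).symm v‖

lemma eN_sq {d : ℕ} {𝕜 : Type*} [RCLike 𝕜] (v : Fin d → 𝕜) :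
    eN v ^ 2 = ∑ i, ‖v i‖ ^ 2 := by
  rw [eN, EuclideanSpace.norm_eq, Real.sq_sqrt (by positivity)]
  rfl

lemma eN_nonneg {d : ℕ} {𝕜 : Type*} [RCLike 𝕜] (v : Fin d → 𝕜) : 0 ≤ eN v := norm_nonneg _

lemma eN_sq_dot {d : ℕ} (v : Fin d → ℝ) : eN v ^ 2 = v ⬝ᵥ v := by
  rw [eN, EuclideanSpace.norm_eq, Real.sq_sqrt (by positivity)]
  simp [dotProduct, Real.norm_eq_abs, sq_abs, sq]

lemma eN_mulVec_le {d : ℕ} {𝕜 : Type*} [RCLike 𝕜] (M : Matrix (Fin d) (Fin d) 𝕜) (v : Fin d → 𝕜) :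
    eN (M *ᵥ v) ≤ ‖M‖ * eN v := by
  simpa [eN] using M.l2_opNorm_mulVec ((WithLp.equiv 2 (Fin d → 𝕜)).symm v)

lemma cs_dot {d : ℕ} {𝕜 : Type*} [RCLike 𝕜] (v w : Fin d → 𝕜) :
    ‖star v ⬝ᵥ w‖ ≤ eN v * eN w := by
  have := norm_inner_le_norm (𝕜 := 𝕜) ((WithLp.equiv 2 (Fin d → 𝕜)).symm v)
    ((WithLp.equiv 2 (Fin d → 𝕜)).symm w)
  rw [dotProduct_comm]
  simpa [EuclideanSpace.inner_eq_star_dotProduct, eN] using this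

lemma dot_mulVec_left {d : ℕ} {𝕜 : Type*} [CommRing 𝕜] (M : Matrix (Fin d) (Fin d) 𝕜)
    (x y : Fin d → 𝕜) : (M *ᵥ x) ⬝ᵥ y = x ⬝ᵥ (Mᵀ *ᵥ y) := by
  rw [Matrix.mulVec_transpose, dotProduct_comm, Matrix.dotProduct_mulVec,
    dotProduct_comm]

lemma dot_mulVec_right {d : ℕ} {𝕜 : Type*} [CommRing 𝕜] (M : Matrix (Fin d) (Fin d) 𝕜)
    (x y : Fin d → 𝕜) : x ⬝ᵥ (M *ᵥ y) = (Mᵀ *ᵥ x) ⬝ᵥ y := by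
  rw [Matrix.dotProduct_mulVec, Matrix.mulVec_transpose]

lemma dot_self_nonneg {d : ℕ} (v : Fin d → ℝ) : 0 ≤ v ⬝ᵥ v :=
  Finset.sum_nonneg fun i _ => mul_self_nonneg _

lemma eN_orth {d : ℕ} (M : Matrix (Fin d) (Fin d) ℝ) (hM : Mᵀ * M = 1) (v : Fin d → ℝ) :
    eN (M *ᵥ v) = eN v := by
  have h : eN (M *ᵥ v) ^ 2 = eN v ^ 2 := by
    rw [eN_sq_dot, eN_sq_dot, dot_mulVec_left, Matrix.mulVec_mulVec, hM, Matrix.one_mulVec]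
  nlinarith [eN_nonneg (M *ᵥ v), eN_nonneg v, h]

lemma opNorm_le_of_bound {d : ℕ} (A : Matrix (Fin d) (Fin d) ℝ) {c : ℝ} (hc : 0 ≤ c)
    (h : ∀ v : Fin d → ℝ, eN (A *ᵥ v) ≤ c * eN v) : ‖A‖ ≤ c := by
  rw [Matrix.l2_opNorm_def]
  apply ContinuousLinearMap.opNorm_le_bound _ hc
  intro x
  have := h ((WithLp.equiv 2 (Fin d → ℝ)) x)
  simpa [eN, Matrix.toEuclideanLin_apply] using this

/-! ### Complexification -/

noncomputable def cplx {d : ℕ} (M : Matrix (Fin d) (Fin d) ℝ) : Matrix (Fin d) (Fin d) ℂ :=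
  M.map (Complex.ofRealHom : ℝ →+* ℂ)

lemma cplx_mul {d : ℕ} (A B : Matrix (Fin d) (Fin d) ℝ) : cplx (A * B) = cplx A * cplx B :=
  _root_.Matrix.map_mul

lemma cplx_sub {d : ℕ} (A B : Matrix (Fin d) (Fin d) ℝ) : cplx (A - B) = cplx A - cplx B :=
  Matrix.map_sub _ (by simp) _ _

lemma cplx_add {d : ℕ} (A B : Matrix (Fin d) (Fin d) ℝ) : cplx (A + B) = cplx A + cplx B :=
  Matrix.map_add _ (by simp) _ _

lemma cplx_one {d : ℕ} : cplx (1 : Matrix (Fin d) (Fin d) ℝ) = 1 := by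
  unfold cplx
  exact Matrix.map_one _ (by simp) (by simp)

lemma cplx_transpose {d : ℕ} (A : Matrix (Fin d) (Fin d) ℝ) : (cplx A)ᵀ = cplx Aᵀ :=
  (Matrix.transpose_map).symm

lemma cplx_mulVec_coe {d : ℕ} (M : Matrix (Fin d) (Fin d) ℝ) (w : Fin d → ℝ) :
    cplx M *ᵥ (fun i => (w i : ℂ)) = fun i => ((M *ᵥ w) i : ℂ) := by
  funext i
  exact (RingHom.map_mulVec Complex.ofRealHom M w i).symm

lemma cplx_mulVec_apply {d : ℕ} (M : Matrix (Fin d) (Fin d) ℝ) (z : Fin d → ℂ) (i : Fin d) :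
    (cplx M *ᵥ z) i = ((M *ᵥ fun j => (z j).re) i : ℝ) + ((M *ᵥ fun j => (z j).im) i : ℝ) * I := by
  simp only [Matrix.mulVec, dotProduct, cplx, Matrix.map_apply]
  push_cast
  rw [Finset.sum_mul, ← Finset.sum_add_distrib]
  congr 1; ext j
  have : z j = (z j).re + (z j).im * I := (Complex.re_add_im (z j)).symm
  rw [this]
  simp only [Complex.ofRealHom_eq_coe, Complex.add_re, Complex.add_im, Complex.ofReal_re,
    Complex.ofReal_im, Complex.mul_re, Complex.mul_im, Complex.I_re, Complex.I_im]
  push_cast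
  ring

lemma cplx_mulVec_star {d : ℕ} (M : Matrix (Fin d) (Fin d) ℝ) (z : Fin d → ℂ) :
    cplx M *ᵥ star z = star (cplx M *ᵥ z) := by
  funext i
  simp only [Pi.star_apply, Matrix.mulVec, dotProduct, cplx, Matrix.map_apply,
    RCLike.star_def, map_sum]
  congr 1; ext j
  rw [_root_.map_mul]
  simp [Complex.conj_ofReal, Complex.ofRealHom_eq_coe]

lemma re_dot_cplx {d : ℕ} (M : Matrix (Fin d) (Fin d) ℝ) (z : Fin d → ℂ) :
    (star z ⬝ᵥ (cplx M *ᵥ z)).re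
      = (fun j => (z j).re) ⬝ᵥ (M *ᵥ fun j => (z j).re)
        + (fun j => (z j).im) ⬝ᵥ (M *ᵥ fun j => (z j).im) := by
  simp only [dotProduct, Pi.star_apply, RCLike.star_def, Complex.re_sum]
  rw [← Finset.sum_add_distrib]
  congr 1; ext i
  rw [cplx_mulVec_apply]
  simp only [Complex.mul_re, Complex.add_re, Complex.add_im, Complex.ofReal_re,
    Complex.ofReal_im, Complex.mul_im, Complex.I_re, Complex.I_im, Complex.conj_re,
    Complex.conj_im]
  ring

lemma re_star_dot' {d : ℕ} (z : Fin d → ℂ) :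
    (star z ⬝ᵥ z).re
      = (fun j => (z j).re) ⬝ᵥ (fun j => (z j).re) + (fun j => (z j).im) ⬝ᵥ (fun j => (z j).im) := by
  simp only [dotProduct, Pi.star_apply, RCLike.star_def, Complex.re_sum]
  rw [← Finset.sum_add_distrib]
  congr 1; ext i
  rw [Complex.mul_re]
  simp only [Complex.conj_re, Complex.conj_im]
  ring

lemma eN_cplx_sq {d : ℕ} (z : Fin d → ℂ) :
    eN z ^ 2 = eN (fun j => (z j).re) ^ 2 + eN (fun j => (z j).im) ^ 2 := by
  simp only [eN_sq]
  rw [← Finset.sum_add_distrib]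
  congr 1; ext i
  simp only [Complex.sq_norm, Complex.normSq_apply, Real.norm_eq_abs]
  rw [_root_.sq_abs, _root_.sq_abs]
  ring

lemma eN_sq_eq_re_star_dot {d : ℕ} (z : Fin d → ℂ) : eN z ^ 2 = (star z ⬝ᵥ z).re := by
  rw [eN_cplx_sq, re_star_dot', eN_sq_dot, eN_sq_dot]

lemma eN_cplx_mulVec_sq {d : ℕ} (M : Matrix (Fin d) (Fin d) ℝ) (z : Fin d → ℂ) :
    eN (cplx M *ᵥ z) ^ 2
      = eN (M *ᵥ fun j => (z j).re) ^ 2 + eN (M *ᵥ fun j => (z j).im) ^ 2 := by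
  simp only [eN_sq]
  rw [← Finset.sum_add_distrib]
  congr 1; ext i
  rw [cplx_mulVec_apply]
  simp only [Complex.sq_norm, Complex.normSq_apply, Real.norm_eq_abs,
    Complex.add_re, Complex.add_im, Complex.ofReal_re, Complex.ofReal_im, Complex.mul_re,
    Complex.mul_im, Complex.I_re, Complex.I_im]
  rw [_root_.sq_abs, _root_.sq_abs]
  ring

lemma eN_cplx_mulVec_le {d : ℕ} (M : Matrix (Fin d) (Fin d) ℝ) (z : Fin d → ℂ) :
    eN (cplx M *ᵥ z) ≤ ‖M‖ * eN z := by
  have h1 := eN_cplx_mulVec_sq M z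
  have h2 := eN_mulVec_le M (fun j => (z j).re)
  have h3 := eN_mulVec_le M (fun j => (z j).im)
  have h4 := eN_cplx_sq z
  have hM : (0:ℝ) ≤ ‖M‖ := norm_nonneg _
  have p2 := pow_le_pow_left₀ (eN_nonneg (M *ᵥ fun j => (z j).re)) h2 2
  have p3 := pow_le_pow_left₀ (eN_nonneg (M *ᵥ fun j => (z j).im)) h3 2
  have key : eN (cplx M *ᵥ z)^2 ≤ (‖M‖ * eN z)^2 := by
    rw [h1]
    rw [mul_pow] at p2 p3 ⊢
    nlinarith [h4]
  nlinarith [key, eN_nonneg (cplx M *ᵥ z), mul_nonneg hM (eN_nonneg z)]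

lemma eN_cplx_orth {d : ℕ} (M : Matrix (Fin d) (Fin d) ℝ) (hM : Mᵀ * M = 1) (z : Fin d → ℂ) :
    eN (cplx M *ᵥ z) = eN z := by
  have h : eN (cplx M *ᵥ z) ^ 2 = eN z ^ 2 := by
    rw [eN_cplx_mulVec_sq, eN_orth M hM, eN_orth M hM, eN_cplx_sq]
  nlinarith [eN_nonneg (cplx M *ᵥ z), eN_nonneg z, h]

/-! ### Spectral facts -/

lemma quad_ge {d : ℕ} [NeZero d] {M : Matrix (Fin d) (Fin d) ℝ} (hM : M.IsHermitian)
    (v : Fin d → ℝ) :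
    (⨅ i, hM.eigenvalues i) * (v ⬝ᵥ v) ≤ v ⬝ᵥ (M *ᵥ v) := by
  classical
  set b := hM.eigenvectorBasis
  set v' : EuclideanSpace ℝ (Fin d) := (WithLp.equiv 2 (Fin d → ℝ)).symm v
  have hsym : (Matrix.toEuclideanLin M).IsSymmetric :=
    Matrix.isHermitian_iff_isSymmetric.mp hM
  have key : v ⬝ᵥ (M *ᵥ v) = ∑ i, hM.eigenvalues i * (inner (𝕜 := ℝ) v' (b i))^2 := by
    have h1 : v ⬝ᵥ (M *ᵥ v) = inner (𝕜 := ℝ) v' (Matrix.toEuclideanLin M v') := by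
      simp [EuclideanSpace.inner_eq_star_dotProduct, v']
      exact dotProduct_comm _ _
    rw [h1, ← OrthonormalBasis.sum_inner_mul_inner b v' (Matrix.toEuclideanLin M v')]
    congr 1; ext i
    have : inner (𝕜 := ℝ) (b i) (Matrix.toEuclideanLin M v')
        = hM.eigenvalues i * inner (𝕜 := ℝ) (b i) v' := by
      rw [← hsym (b i) v']
      have hb : Matrix.toEuclideanLin M (b i) = hM.eigenvalues i • (b i) := by
        apply (WithLp.equiv 2 (Fin d → ℝ)).injective
        simpa [Matrix.ofLp_toEuclideanLin_apply] using hM.mulVec_eigenvectorBasis i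
      rw [hb, inner_smul_left]
      simp
    rw [this, real_inner_comm (b i) v']
    ring
  have hvv : v ⬝ᵥ v = ∑ i, (inner (𝕜 := ℝ) v' (b i))^2 := by
    have := OrthonormalBasis.sum_inner_mul_inner b v' v'
    have h2 : v ⬝ᵥ v = inner (𝕜 := ℝ) v' v' := by
      simp [EuclideanSpace.inner_eq_star_dotProduct, v']; rw [← eN_sq_dot]; rfl
    rw [h2, ← this]
    congr 1; ext i
    rw [real_inner_comm (b i) v']; ring
  rw [key, hvv, Finset.mul_sum]
  apply Finset.sum_le_sum
  intro i _
  have h3 : (⨅ j, hM.eigenvalues j) ≤ hM.eigenvalues i := ciInf_le (Finite.bddBelow_range _) i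
  nlinarith [sq_nonneg (inner (𝕜 := ℝ) v' (b i))]

lemma exists_eig_min {d : ℕ} (hd : 0 < d) (f : Fin d → ℝ) :
    ∃ i₀, f i₀ = ⨅ i, f i ∧ ∀ j, f i₀ ≤ f j := by
  have : Nonempty (Fin d) := ⟨⟨0, hd⟩⟩
  obtain ⟨i₀, -, h⟩ :=
    Finset.exists_min_image Finset.univ f ⟨Classical.arbitrary _, Finset.mem_univ _⟩
  exact ⟨i₀, le_antisymm (le_ciInf fun j => h j (Finset.mem_univ _))
    (ciInf_le (Finite.bddBelow_range _) i₀), fun j => h j (Finset.mem_univ _)⟩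

lemma posDef_tmul {d : ℕ} (X : Matrix (Fin d) (Fin d) ℝ) (hX : IsUnit X) :
    (Xᵀ * X).PosDef := by
  refine Matrix.PosDef.of_dotProduct_mulVec_pos (Matrix.isHermitian_conjTranspose_mul_self X) fun v hv => ?_
  have h1 : star v ⬝ᵥ ((Xᵀ * X) *ᵥ v) = (X *ᵥ v) ⬝ᵥ (X *ᵥ v) := by
    rw [← Matrix.mulVec_mulVec, Matrix.dotProduct_mulVec, ← Matrix.mulVec_transpose]
    simp [dotProduct_comm]
  rw [h1]
  have hXv : X *ᵥ v ≠ 0 := fun h =>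
    hv (Matrix.mulVec_injective_iff_isUnit.2 hX (by simpa using h))
  obtain ⟨i, hi⟩ := Function.ne_iff.mp hXv
  have h2 : (X *ᵥ v) ⬝ᵥ (X *ᵥ v) = ∑ j, ((X *ᵥ v) j)^2 := by
    simp [dotProduct, sq]
  rw [h2]
  exact Finset.sum_pos' (fun j _ => sq_nonneg _)
    ⟨i, Finset.mem_univ _, by simpa [sq_abs] using pow_pos (abs_pos.mpr hi) 2⟩

lemma sigma_inf_pos {d : ℕ} (hd : 0 < d) (X : Matrix (Fin d) (Fin d) ℝ) (hX : IsUnit X) :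
    0 < ⨅ i, singularValues X i := by
  obtain ⟨i₀, h1, -⟩ := exists_eig_min hd (singularValues X)
  rw [← h1, singularValues]
  exact Real.sqrt_pos.mpr ((posDef_tmul X hX).eigenvalues_pos i₀)

lemma sigma_quad {d : ℕ} (hd : 0 < d) (X W : Matrix (Fin d) (Fin d) ℝ)
    (hX : IsUnit X) (hW : W.PosDef) (hW2 : W * W = Xᵀ * X) (v : Fin d → ℝ) :
    (⨅ i, singularValues X i) * (v ⬝ᵥ v) ≤ v ⬝ᵥ (W *ᵥ v) := by
  have : NeZero d := ⟨hd.ne'⟩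
  set a := ⨅ i, singularValues X i with ha
  have ha0 : 0 < a := sigma_inf_pos hd X hX
  have haq : ∀ u : Fin d → ℝ, a^2 * (u ⬝ᵥ u) ≤ u ⬝ᵥ ((Xᵀ * X) *ᵥ u) := by
    intro u
    have h1 := quad_ge (Matrix.isHermitian_conjTranspose_mul_self X) u
    rw [show (Xᵀ : Matrix (Fin d) (Fin d) ℝ) = Xᴴ from
      (Matrix.conjTranspose_eq_transpose_of_trivial X).symm]
    have h2 : a^2 ≤ ⨅ i, (Matrix.isHermitian_conjTranspose_mul_self X).eigenvalues i := by
      obtain ⟨j, hj, -⟩ := exists_eig_min hd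
        ((Matrix.isHermitian_conjTranspose_mul_self X).eigenvalues)
      rw [← hj]
      have h3 : a ≤ singularValues X j := ciInf_le (Finite.bddBelow_range _) j
      have h4 : singularValues X j ^ 2
          = (Matrix.isHermitian_conjTranspose_mul_self X).eigenvalues j :=
        Real.sq_sqrt ((posSemidef_conjTranspose_mul_self X).eigenvalues_nonneg j)
      nlinarith
    nlinarith [dot_self_nonneg u, h1, mul_le_mul_of_nonneg_right h2 (dot_self_nonneg u)]
  have heig : ∀ j, a ≤ hW.1.eigenvalues j := by
    intro j
    set t := hW.1.eigenvalues j with htdef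
    have ht : 0 < t := hW.eigenvalues_pos j
    set u : Fin d → ℝ := ⇑(hW.1.eigenvectorBasis j) with hu
    have huu : u ⬝ᵥ u = 1 := by
      have hnorm : ‖hW.1.eigenvectorBasis j‖ = 1 := hW.1.eigenvectorBasis.orthonormal.1 j
      have h5 : u ⬝ᵥ u = ∑ i, ‖u i‖^2 := by
        simp [dotProduct, Real.norm_eq_abs, sq_abs, sq]
      rw [h5]
      rw [EuclideanSpace.norm_eq] at hnorm
      have := congrArg (· ^ 2) hnorm
      simpa [Real.sq_sqrt (Finset.sum_nonneg fun i _ => sq_nonneg _)] using this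
    have hWu : W *ᵥ u = t • u := hW.1.mulVec_eigenvectorBasis j
    have hq : u ⬝ᵥ ((Xᵀ * X) *ᵥ u) = t^2 := by
      rw [← hW2, ← Matrix.mulVec_mulVec, hWu, Matrix.mulVec_smul, hWu,
        dotProduct_smul, dotProduct_smul]
      simp [huu, sq]
    have := haq u
    rw [hq, huu, mul_one] at this
    nlinarith
  have h5 := quad_ge hW.1 v
  have h6 : a ≤ ⨅ i, hW.1.eigenvalues i := le_ciInf heig
  nlinarith [mul_le_mul_of_nonneg_right h6 (dot_self_nonneg v)]

lemma sigma_quad_c {d : ℕ} (hd : 0 < d) (X W : Matrix (Fin d) (Fin d) ℝ)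
    (hX : IsUnit X) (hW : W.PosDef) (hW2 : W * W = Xᵀ * X) (z : Fin d → ℂ) :
    (⨅ i, singularValues X i) * (star z ⬝ᵥ z).re ≤ (star z ⬝ᵥ (cplx W *ᵥ z)).re := by
  rw [re_dot_cplx, re_star_dot', mul_add]
  have h1 := sigma_quad hd X W hX hW hW2 (fun j => (z j).re)
  have h2 := sigma_quad hd X W hX hW hW2 (fun j => (z j).im)
  linarith

/-! ### Complex eigenvector of an orthogonal matrix -/

lemma exists_eigvec {d : ℕ} (P : Matrix (Fin d) (Fin d) ℝ) (hPo : Pᵀ * P = 1)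
    (v : Fin d → ℝ) (hvv : v ⬝ᵥ v = 1) (μ : ℝ) (hSv : (P + Pᵀ) *ᵥ v = μ • v)
    (hμ4 : μ ^ 2 ≤ 4) :
    ∃ (lam : ℂ) (z : Fin d → ℂ), Complex.normSq lam = 1 ∧ lam.re = μ / 2 ∧
      (cplx P) *ᵥ z = lam • z ∧ 0 < (star z ⬝ᵥ z).re := by
  have hPo2 : P * Pᵀ = 1 := mul_eq_one_comm.mp hPo
  have hPv : P *ᵥ v + Pᵀ *ᵥ v = μ • v := by rw [← Matrix.add_mulVec]; exact hSv
  have hPPv : P *ᵥ (P *ᵥ v) = μ • (P *ᵥ v) - v := by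
    have h1 : Pᵀ *ᵥ v = μ • v - P *ᵥ v := by rw [← hPv]; abel
    have h2 : P *ᵥ (Pᵀ *ᵥ v) = v := by
      rw [Matrix.mulVec_mulVec, hPo2, Matrix.one_mulVec]
    rw [h1, Matrix.mulVec_sub, Matrix.mulVec_smul] at h2
    rw [sub_eq_iff_eq_add.mp h2]; abel
  have htr : v ⬝ᵥ (Pᵀ *ᵥ v) = v ⬝ᵥ (P *ᵥ v) := by
    rw [dot_mulVec_right, Matrix.transpose_transpose]
    exact dotProduct_comm _ _
  have hvPv : v ⬝ᵥ (P *ᵥ v) = μ / 2 := by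
    have h1 : v ⬝ᵥ ((P + Pᵀ) *ᵥ v) = μ := by
      rw [hSv, dotProduct_smul, hvv]; simp
    rw [Matrix.add_mulVec, dotProduct_add, htr] at h1
    linarith
  have hc : (P *ᵥ v) ⬝ᵥ v = μ/2 := by rw [dotProduct_comm]; exact hvPv
  have hPvPv : (P *ᵥ v) ⬝ᵥ (P *ᵥ v) = 1 := by
    rw [dot_mulVec_right, Matrix.mulVec_mulVec, hPo, Matrix.one_mulVec, hvv]
  by_cases hs : 1 - μ ^ 2 / 4 ≤ 0
  · have hμ2 : μ ^ 2 = 4 := le_antisymm hμ4 (by linarith)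
    have hzero : (P *ᵥ v - (μ/2) • v) ⬝ᵥ (P *ᵥ v - (μ/2) • v) = 0 := by
      simp only [sub_dotProduct, dotProduct_sub, smul_dotProduct,
        dotProduct_smul, smul_eq_mul, hPvPv, hvv, hvPv, hc]
      nlinarith
    have heq : P *ᵥ v = (μ/2) • v :=
      sub_eq_zero.mp (dotProduct_self_eq_zero.mp hzero)
    refine ⟨(μ/2 : ℝ), fun i => (v i : ℂ), ?_, by simp, ?_, ?_⟩
    · simp only [Complex.normSq_ofReal]; nlinarith
    · rw [cplx_mulVec_coe, heq]
      funext i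
      simp only [Pi.smul_apply, smul_eq_mul, Complex.real_smul]
      push_cast
      ring
    · rw [re_star_dot']
      have hre : (fun j => (((v j : ℂ))).re) = v := by funext j; simp
      have him0 : (fun j => (((v j : ℂ))).im) = fun _ => (0:ℝ) := by funext j; simp
      rw [hre, him0, hvv]
      simp [dotProduct]
  · push_neg at hs
    set s := Real.sqrt (1 - μ^2/4) with hsdef
    have hs0 : 0 < s := Real.sqrt_pos.mpr hs
    have hs2 : s^2 = 1 - μ^2/4 := Real.sq_sqrt (by linarith)
    set lam : ℂ := ⟨μ/2, s⟩ with hlam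
    have hlamre : lam.re = μ/2 := rfl
    have hlamim : lam.im = s := rfl
    have hnormSq : Complex.normSq lam = 1 := by
      simp only [Complex.normSq_apply, hlamre, hlamim]; nlinarith
    have hconj : (starRingEnd ℂ) lam = (μ : ℂ) - lam := by
      apply Complex.ext
      · simp only [Complex.conj_re, Complex.sub_re, Complex.ofReal_re, hlamre]; ring
      · simp only [Complex.conj_im, Complex.sub_im, Complex.ofReal_im, hlamim]; ring
    have hmul' : lam * ((μ:ℂ) - lam) = 1 := by
      rw [← hconj, Complex.mul_conj, hnormSq]; simp
    set z : Fin d → ℂ := (fun i => ((P *ᵥ v) i : ℂ)) - (starRingEnd ℂ lam) • (fun i => (v i : ℂ))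
      with hz
    refine ⟨lam, z, hnormSq, hlamre, ?_, ?_⟩
    · rw [hz, Matrix.mulVec_sub, Matrix.mulVec_smul, cplx_mulVec_coe, cplx_mulVec_coe, hPPv,
        hconj]
      funext i
      simp only [Pi.sub_apply, Pi.smul_apply, smul_eq_mul]
      push_cast
      linear_combination ((v i : ℂ)) * hmul'
    · rw [re_star_dot']
      have him : (fun j => (z j).im) = fun j => s * v j := by
        funext j
        simp [hz, Complex.sub_im, Complex.smul_im, Complex.conj_im, hlamim,
          Complex.smul_re]
      rw [him]
      have h1 : (fun j => s * v j) ⬝ᵥ (fun j => s * v j) = s^2 := by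
        rw [show ((fun j => s * v j) ⬝ᵥ fun j => s * v j) = s * s * (v ⬝ᵥ v) by
          simp only [dotProduct, Finset.mul_sum]; congr 1; ext i; ring]
        rw [hvv]; ring
      have h2 : 0 ≤ (fun j => (z j).re) ⬝ᵥ (fun j => (z j).re) :=
        Finset.sum_nonneg fun i _ => mul_self_nonneg _
      nlinarith

end PolarAux

open Complex
open scoped Matrix.Norms.L2Operator ComplexConjugate

set_option maxHeartbeats 2000000 in
theorem polar_factor_lipschitz (d : ℕ) (hd : 0 < d)
    (X Y PX WX PY WY : Matrix (Fin d) (Fin d) ℝ)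
    (hX : IsUnit X) (hY : IsUnit Y)
    (hPX : PXᵀ * PX = 1) (hWX : WX.PosDef) (hXpolar : X = PX * WX)
    (hPY : PYᵀ * PY = 1) (hWY : WY.PosDef) (hYpolar : Y = PY * WY) :
    opNorm (PX - PY) ≤
      2 * Real.sqrt 2 * min (⨅ i, singularValues X i)⁻¹ (⨅ i, singularValues Y i)⁻¹ *
        opNorm (X - Y) := by
  classical
  have hNZ : NeZero d := ⟨hd.ne'⟩
  set a := ⨅ i, singularValues X i with hadef
  set b := ⨅ i, singularValues Y i with hbdef
  have ha0 : 0 < a := sigma_inf_pos hd X hX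
  have hb0 : 0 < b := sigma_inf_pos hd Y hY
  have hE0 : (0:ℝ) ≤ ‖X - Y‖ := norm_nonneg _
  have hWXt : WXᵀ = WX := by
    rw [← Matrix.conjTranspose_eq_transpose_of_trivial, hWX.1]
  have hWYt : WYᵀ = WY := by
    rw [← Matrix.conjTranspose_eq_transpose_of_trivial, hWY.1]
  have hWX2 : WX * WX = Xᵀ * X := by
    rw [hXpolar, Matrix.transpose_mul, hWXt, Matrix.mul_assoc, ← Matrix.mul_assoc PXᵀ, hPX,
      Matrix.one_mul]
  have hWY2 : WY * WY = Yᵀ * Y := by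
    rw [hYpolar, Matrix.transpose_mul, hWYt, Matrix.mul_assoc, ← Matrix.mul_assoc PYᵀ, hPY,
      Matrix.one_mul]
  have hPXo : PX * PXᵀ = 1 := mul_eq_one_comm.mp hPX
  have hPYo : PY * PYᵀ = 1 := mul_eq_one_comm.mp hPY
  set P := PXᵀ * PY with hPdef
  have hPt : Pᵀ = PYᵀ * PX := by
    rw [hPdef, Matrix.transpose_mul, Matrix.transpose_transpose]
  have hPo : Pᵀ * P = 1 := by
    rw [hPt, hPdef, Matrix.mul_assoc, ← Matrix.mul_assoc PX, hPXo, Matrix.one_mul, hPY]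
  set S := P + Pᵀ with hSdef
  have hS : S.IsHermitian := by
    show Sᴴ = S
    rw [Matrix.conjTranspose_eq_transpose_of_trivial, hSdef, Matrix.transpose_add,
      Matrix.transpose_transpose, add_comm]
  obtain ⟨i₀, hmin, -⟩ := exists_eig_min hd hS.eigenvalues
  set μ := hS.eigenvalues i₀ with hμdef
  set v : Fin d → ℝ := ⇑(hS.eigenvectorBasis i₀) with hvdef
  have hvv : v ⬝ᵥ v = 1 := by
    have hnorm : ‖hS.eigenvectorBasis i₀‖ = 1 := hS.eigenvectorBasis.orthonormal.1 i₀
    have h5 : v ⬝ᵥ v = ∑ i, ‖v i‖^2 := by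
      simp [dotProduct, Real.norm_eq_abs, sq_abs, sq]
    rw [h5]
    rw [EuclideanSpace.norm_eq] at hnorm
    have := congrArg (· ^ 2) hnorm
    simpa [Real.sq_sqrt (Finset.sum_nonneg fun i _ => sq_nonneg _)] using this
  have hSv : S *ᵥ v = μ • v := hS.mulVec_eigenvectorBasis i₀
  have hquadS : ∀ u : Fin d → ℝ, μ * (u ⬝ᵥ u) ≤ u ⬝ᵥ (S *ᵥ u) := by
    intro u
    rw [hmin]
    exact quad_ge hS u
  -- μ² ≤ 4
  have heNv : eN v = 1 := by nlinarith [eN_nonneg v, eN_sq_dot v, hvv]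
  have htr : v ⬝ᵥ (Pᵀ *ᵥ v) = v ⬝ᵥ (P *ᵥ v) := by
    rw [dot_mulVec_right, Matrix.transpose_transpose]
    exact dotProduct_comm _ _
  have hvPv : v ⬝ᵥ (P *ᵥ v) = μ / 2 := by
    have h1 : v ⬝ᵥ (S *ᵥ v) = μ := by
      rw [hSv, dotProduct_smul, hvv]; simp
    rw [hSdef, Matrix.add_mulVec, dotProduct_add, htr] at h1
    linarith
  have hμ4 : μ ^ 2 ≤ 4 := by
    have hcs := cs_dot (𝕜 := ℝ) v (P *ᵥ v)
    rw [star_trivial, hvPv, heNv, eN_orth P hPo v, heNv, Real.norm_eq_abs] at hcs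
    have := abs_le.mp (by simpa using hcs)
    nlinarith [this.1, this.2]
  have hμ2 : μ ≤ 2 := by nlinarith
  -- operator norm bound by √(2 - μ)
  have hexp : (PX - PY)ᵀ * (PX - PY) = (1 + 1) - S := by
    rw [Matrix.transpose_sub, Matrix.sub_mul, Matrix.mul_sub, Matrix.mul_sub, hPX, hPY,
      hSdef, hPdef, hPt]
    abel
  have hopn : ‖PX - PY‖ ≤ Real.sqrt (2 - μ) := by
    apply opNorm_le_of_bound _ (Real.sqrt_nonneg _)
    intro u
    have hqq : eN ((PX - PY) *ᵥ u) ^ 2 ≤ (2 - μ) * (u ⬝ᵥ u) := by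
      rw [eN_sq_dot, dot_mulVec_left, Matrix.mulVec_mulVec, hexp]
      have h7 : u ⬝ᵥ (((1 + 1 : Matrix (Fin d) (Fin d) ℝ) - S) *ᵥ u)
          = 2 * (u ⬝ᵥ u) - u ⬝ᵥ (S *ᵥ u) := by
        rw [Matrix.sub_mulVec, dotProduct_sub, Matrix.add_mulVec, Matrix.one_mulVec,
          dotProduct_add]
        ring
      rw [h7]
      have := hquadS u
      linarith
    have hrs : (Real.sqrt (2 - μ) * eN u) ^ 2 = (2 - μ) * (u ⬝ᵥ u) := by
      rw [mul_pow, Real.sq_sqrt (by linarith), eN_sq_dot]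
    nlinarith [eN_nonneg ((PX - PY) *ᵥ u), eN_nonneg u, Real.sqrt_nonneg (2 - μ),
      mul_nonneg (Real.sqrt_nonneg (2 - μ)) (eN_nonneg u)]
  -- complex eigenvector
  obtain ⟨lam, z, hnsq, hre, hzeig, hnz⟩ := exists_eigvec P hPo v hvv μ hSv hμ4
  set nz := (star z ⬝ᵥ z).re with hnzdef
  have hlamconj : lam * (starRingEnd ℂ) lam = 1 := by
    rw [Complex.mul_conj, hnsq]; simp
  have hPtz : cplx Pᵀ *ᵥ z = (starRingEnd ℂ) lam • z := by
    have h1 : cplx Pᵀ *ᵥ (cplx P *ᵥ z) = z := by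
      rw [Matrix.mulVec_mulVec, ← cplx_mul, hPo, cplx_one, Matrix.one_mulVec]
    rw [hzeig, Matrix.mulVec_smul] at h1
    have h2 := congrArg (fun w => (starRingEnd ℂ) lam • w) h1
    rwa [smul_smul, mul_comm ((starRingEnd ℂ) lam) lam, hlamconj, one_smul] at h2
  -- the matrix identity
  have hXt : Xᵀ * PY = WX * P := by
    rw [hXpolar, Matrix.transpose_mul, hWXt, Matrix.mul_assoc, ← hPdef]
  have hYt : Yᵀ * PY = WY := by
    rw [hYpolar, Matrix.transpose_mul, hWYt, Matrix.mul_assoc, hPY, Matrix.mul_one]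
  have hPXX : PXᵀ * X = WX := by
    rw [hXpolar, ← Matrix.mul_assoc, hPX, Matrix.one_mul]
  have hPXY : PXᵀ * Y = P * WY := by
    rw [hYpolar, ← Matrix.mul_assoc, ← hPdef]
  have himp : (X - Y)ᵀ * PY - PXᵀ * (X - Y) = WX * (P - 1) + (P - 1) * WY := by
    rw [Matrix.transpose_sub, Matrix.sub_mul, Matrix.mul_sub, hXt, hYt, hPXX, hPXY,
      Matrix.mul_sub, Matrix.sub_mul, Matrix.mul_one, Matrix.one_mul]
    abel
  have himpC : cplx ((X - Y)ᵀ) * cplx PY - cplx PXᵀ * cplx (X - Y)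
      = cplx WX * (cplx P - 1) + (cplx P - 1) * cplx WY := by
    have h1 := congrArg cplx himp
    rwa [cplx_sub ((X - Y)ᵀ * PY) (PXᵀ * (X - Y)), cplx_add, cplx_mul, cplx_mul, cplx_mul,
      cplx_mul, cplx_sub P 1, cplx_one] at h1
  -- apply everything to z
  have hzP : (cplx P - 1) *ᵥ z = (lam - 1) • z := by
    rw [Matrix.sub_mulVec, hzeig, Matrix.one_mulVec, sub_smul, one_smul]
  have hzPt : (cplx P - 1)ᵀ *ᵥ star z = (lam - 1) • star z := by
    rw [Matrix.transpose_sub, Matrix.transpose_one, cplx_transpose, Matrix.sub_mulVec,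
      Matrix.one_mulVec, cplx_mulVec_star, hPtz, star_smul, sub_smul, one_smul]
    congr 1
    simp
  set q1 := star z ⬝ᵥ (cplx WX *ᵥ z) with hq1def
  set q2 := star z ⬝ᵥ (cplx WY *ᵥ z) with hq2def
  have hterm1 : star z ⬝ᵥ ((cplx WX * (cplx P - 1)) *ᵥ z) = (lam - 1) * q1 := by
    rw [← Matrix.mulVec_mulVec, hzP, Matrix.mulVec_smul, dotProduct_smul, smul_eq_mul]
  have hterm2 : star z ⬝ᵥ (((cplx P - 1) * cplx WY) *ᵥ z) = (lam - 1) * q2 := by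
    rw [← Matrix.mulVec_mulVec, dot_mulVec_right, hzPt, smul_dotProduct, smul_eq_mul,
      hq2def, dot_mulVec_right]
  set t1 := star z ⬝ᵥ ((cplx ((X - Y)ᵀ) * cplx PY) *ᵥ z) with ht1def
  set t2 := star z ⬝ᵥ ((cplx PXᵀ * cplx (X - Y)) *ᵥ z) with ht2def
  have hmain : (lam - 1) * (q1 + q2) = t1 - t2 := by
    have h2 := congrArg (fun A : Matrix (Fin d) (Fin d) ℂ => star z ⬝ᵥ (A *ᵥ z)) himpC
    rw [Matrix.add_mulVec, dotProduct_add, hterm1, hterm2, Matrix.sub_mulVec,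
      dotProduct_sub] at h2
    rw [mul_add, ← h2, ht1def, ht2def]
  -- bounds on the right side
  have hnz' : eN z ^ 2 = nz := eN_sq_eq_re_star_dot z
  have htrn : ‖(X - Y)ᵀ‖ = ‖X - Y‖ := by
    rw [← Matrix.conjTranspose_eq_transpose_of_trivial]
    exact Matrix.l2_opNorm_conjTranspose _
  have ht1b : ‖t1‖ ≤ ‖X - Y‖ * nz := by
    rw [ht1def, ← Matrix.mulVec_mulVec]
    calc ‖star z ⬝ᵥ (cplx ((X - Y)ᵀ) *ᵥ (cplx PY *ᵥ z))‖
        ≤ eN z * eN (cplx ((X - Y)ᵀ) *ᵥ (cplx PY *ᵥ z)) := cs_dot _ _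
      _ ≤ eN z * (‖(X - Y)ᵀ‖ * eN (cplx PY *ᵥ z)) := by
          exact mul_le_mul_of_nonneg_left (eN_cplx_mulVec_le _ _) (eN_nonneg z)
      _ = ‖X - Y‖ * nz := by
          rw [eN_cplx_orth PY hPY z, htrn, ← hnz']; ring
  have hPXto : (PXᵀ)ᵀ * PXᵀ = 1 := by rw [Matrix.transpose_transpose, hPXo]
  have ht2b : ‖t2‖ ≤ ‖X - Y‖ * nz := by
    rw [ht2def, ← Matrix.mulVec_mulVec]
    calc ‖star z ⬝ᵥ (cplx PXᵀ *ᵥ (cplx (X - Y) *ᵥ z))‖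
        ≤ eN z * eN (cplx PXᵀ *ᵥ (cplx (X - Y) *ᵥ z)) := cs_dot _ _
      _ = eN z * eN (cplx (X - Y) *ᵥ z) := by rw [eN_cplx_orth PXᵀ hPXto]
      _ ≤ eN z * (‖X - Y‖ * eN z) := by
          exact mul_le_mul_of_nonneg_left (eN_cplx_mulVec_le _ _) (eN_nonneg z)
      _ = ‖X - Y‖ * nz := by rw [← hnz']; ring
  -- lower bound on the left side
  have hq1b : a * nz ≤ q1.re := sigma_quad_c hd X WX hX hWX hWX2 z
  have hq2b : b * nz ≤ q2.re := sigma_quad_c hd Y WY hY hWY hWY2 z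
  have hsum_re : (a + b) * nz ≤ (q1 + q2).re := by
    rw [Complex.add_re]; linarith
  have hre_abs : (q1 + q2).re ≤ ‖q1 + q2‖ := by
    exact Complex.re_le_norm _
  have habs : ‖lam - 1‖ * ((a + b) * nz) ≤ 2 * (‖X - Y‖ * nz) := by
    have h3 : ‖(lam - 1) * (q1 + q2)‖ ≤ ‖t1‖ + ‖t2‖ := by
      rw [hmain]; exact norm_sub_le _ _
    rw [norm_mul] at h3
    have h4 : ‖lam - 1‖ * ((a + b) * nz) ≤ ‖lam - 1‖ * ‖q1 + q2‖ :=
      mul_le_mul_of_nonneg_left (le_trans hsum_re hre_abs) (norm_nonneg _)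
    linarith
  have hdiv : ‖lam - 1‖ * (a + b) ≤ 2 * ‖X - Y‖ := by
    have h5 : (‖lam - 1‖ * (a + b)) * nz ≤ (2 * ‖X - Y‖) * nz := by
      calc (‖lam - 1‖ * (a + b)) * nz = ‖lam - 1‖ * ((a + b) * nz) := by ring
        _ ≤ 2 * (‖X - Y‖ * nz) := habs
        _ = (2 * ‖X - Y‖) * nz := by ring
    exact le_of_mul_le_mul_right h5 hnz
  -- identify √(2 - μ) with ‖lam - 1‖
  have hsqrt_eq : Real.sqrt (2 - μ) = ‖lam - 1‖ := by
    rw [Complex.norm_def]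
    congr 1
    have h6 : lam.im ^ 2 = 1 - (μ/2)^2 := by
      have h7 := hnsq
      rw [Complex.normSq_apply, hre] at h7
      nlinarith
    rw [Complex.normSq_apply, Complex.sub_re, Complex.sub_im, hre]
    simp only [Complex.one_re, Complex.one_im]
    nlinarith
  -- final computation
  have hfin : ‖PX - PY‖ ≤ 2 * ‖X - Y‖ / (a + b) := by
    rw [le_div_iff₀ (by linarith : (0:ℝ) < a + b)]
    calc ‖PX - PY‖ * (a + b) ≤ Real.sqrt (2 - μ) * (a + b) :=
          mul_le_mul_of_nonneg_right hopn (by linarith)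
      _ = ‖lam - 1‖ * (a + b) := by rw [hsqrt_eq]
      _ ≤ 2 * ‖X - Y‖ := hdiv
  show ‖PX - PY‖ ≤ 2 * Real.sqrt 2 * min a⁻¹ b⁻¹ * ‖X - Y‖
  have hm : (a + b)⁻¹ ≤ min a⁻¹ b⁻¹ := by
    apply le_min
    · exact inv_anti₀ ha0 (by linarith)
    · exact inv_anti₀ hb0 (by linarith)
  have hmin0 : (0:ℝ) ≤ min a⁻¹ b⁻¹ := le_min (by positivity) (by positivity)
  have hsq1 : (1:ℝ) ≤ Real.sqrt 2 := by
    rw [show (1:ℝ) = Real.sqrt 1 from (Real.sqrt_one).symm]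
    exact Real.sqrt_le_sqrt (by norm_num)
  have hstep : 2 * ‖X - Y‖ / (a + b) = 2 * ‖X - Y‖ * (a + b)⁻¹ := div_eq_mul_inv _ _
  calc ‖PX - PY‖ ≤ 2 * ‖X - Y‖ * (a + b)⁻¹ := by rw [← hstep]; exact hfin
    _ ≤ 2 * ‖X - Y‖ * min a⁻¹ b⁻¹ := by
        exact mul_le_mul_of_nonneg_left hm (by positivity)
    _ ≤ 2 * Real.sqrt 2 * min a⁻¹ b⁻¹ * ‖X - Y‖ := by
        nlinarith [mul_nonneg hmin0 hE0]
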